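/- For ρ > 0 sufficiently small, the quantity F̃(ρ) = ∫₀^{2π/3} (ρ + sin² y)^{1/2} (3/4 − sin² y) dy is strictly positive, while F̃(0) = 0. -/

import Mathlib

/-! The identity `∫₀^{2π/3} sin y (3/4 - sin² y) dy = 0`, together with `√(sin² y) = sin y` on
`[0, 2π/3]`, gives `F̃(0) = 0`. For `ρ > 0` the map `s ↦ √(ρ + s²) - s` is antitone, so with
`c = √(ρ + 3/4) - √3/2 > 0` the difference `√(ρ + s²) - s - c` has the sign of `3/4 - s²` for
`s ≥ 0`. Hence `F̃(ρ) ≥ ∫ (sin y + c)(3/4 - sin² y) dy = c (π/6 - √3/8) > 0`, for every `ρ > 0`. -/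

open Real intervalIntegral

lemma cos_two_pi_div_three : cos (2 * π / 3) = -(1 / 2) := by
  rw [show 2 * π / 3 = π - π / 3 by ring, cos_pi_sub, cos_pi_div_three]

lemma sin_two_pi_div_three : sin (2 * π / 3) = √3 / 2 := by
  rw [show 2 * π / 3 = π - π / 3 by ring, sin_pi_sub, sin_pi_div_three]

lemma sin_nonneg_of_mem_uIcc_zero_two_pi_div_three {y : ℝ} (hy : y ∈ Set.uIcc 0 (2 * π / 3)) :
    0 ≤ sin y := by
  rw [Set.uIcc_of_le (by positivity)] at hy
  exact sin_nonneg_of_nonneg_of_le_pi hy.1 (by linarith [hy.2, pi_pos])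

lemma integral_sin_mul_three_quarters_sub_sin_sq_eq_zero :
    ∫ y in (0:ℝ)..(2 * π / 3), sin y * (3 / 4 - sin y ^ 2) = 0 := by
  simp_rw [mul_sub, mul_comm (sin _) (3 / 4), ← pow_succ']
  rw [integral_sub ((by fun_prop : Continuous _).intervalIntegrable _ _)
    ((by fun_prop : Continuous _).intervalIntegrable _ _), integral_const_mul, integral_sin,
    integral_sin_pow_three, cos_two_pi_div_three, cos_zero]
  norm_num

lemma integral_three_quarters_sub_sin_sq_pos :
    0 < ∫ y in (0:ℝ)..(2 * π / 3), (3 / 4 - sin y ^ 2) := by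
  rw [integral_sub intervalIntegrable_const ((by fun_prop : Continuous _).intervalIntegrable _ _),
    integral_const, integral_sin_sq, cos_two_pi_div_three, sin_two_pi_div_three, sin_zero]
  have : √3 < 2 := by
    rw [show (2:ℝ) = √(2 ^ 2) by simp]
    exact sqrt_lt_sqrt (by norm_num) (by norm_num)
  norm_num
  nlinarith [pi_gt_three]

lemma antitone_sqrt_add_sq_sub {ρ : ℝ} (hρ : 0 ≤ ρ) : Antitone fun s => √(ρ + s ^ 2) - s := by
  intro s t hst
  have hs : s ≤ √(ρ + s ^ 2) := le_sqrt_of_sq_le (by linarith)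
  have : √(ρ + t ^ 2) ≤ √(ρ + s ^ 2) + (t - s) := by
    rw [sqrt_le_left (by linarith [sqrt_nonneg (ρ + s ^ 2)])]
    nlinarith [sq_sqrt (show 0 ≤ ρ + s ^ 2 by positivity),
      mul_le_mul_of_nonneg_left hs (sub_nonneg.2 hst)]
  dsimp only
  linarith

lemma Antitone.sub_mul_sq_sub_sq_nonneg {φ : ℝ → ℝ} (hφ : Antitone φ) {s a : ℝ} (hs : 0 ≤ s)
    (ha : 0 ≤ a) : 0 ≤ (φ s - φ a) * (a ^ 2 - s ^ 2) := by
  rcases le_total s a with h | h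
  · exact mul_nonneg (sub_nonneg.2 (hφ h)) (by nlinarith)
  · exact mul_nonneg_of_nonpos_of_nonpos (sub_nonpos.2 (hφ h)) (by nlinarith)

lemma integral_sqrt_sin_sq_mul_three_quarters_sub_sin_sq_eq_zero :
    ∫ y in (0:ℝ)..(2 * π / 3), √(0 + sin y ^ 2) * (3 / 4 - sin y ^ 2) = 0 := by
  refine (integral_congr fun y hy => ?_).trans integral_sin_mul_three_quarters_sub_sin_sq_eq_zero
  simp only [zero_add, sqrt_sq (sin_nonneg_of_mem_uIcc_zero_two_pi_div_three hy)]

lemma integral_sqrt_add_sin_sq_mul_three_quarters_sub_sin_sq_pos {ρ : ℝ} (hρ : 0 < ρ) :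
    0 < ∫ y in (0:ℝ)..(2 * π / 3), √(ρ + sin y ^ 2) * (3 / 4 - sin y ^ 2) := by
  have h34 : (√3 / 2) ^ 2 = 3 / 4 := by rw [div_pow, sq_sqrt zero_le_three]; norm_num
  set c := √(ρ + 3 / 4) - √3 / 2
  have hc : 0 < c := by
    rw [sub_pos, lt_sqrt (by positivity), h34]
    linarith
  have hle : ∀ y ∈ Set.Icc (0:ℝ) (2 * π / 3),
      (sin y + c) * (3 / 4 - sin y ^ 2) ≤ √(ρ + sin y ^ 2) * (3 / 4 - sin y ^ 2) := by
    intro y hy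
    have hsin := sin_nonneg_of_mem_uIcc_zero_two_pi_div_three (Set.Icc_subset_uIcc hy)
    have := (antitone_sqrt_add_sq_sub hρ.le).sub_mul_sq_sub_sq_nonneg hsin
      (by positivity : 0 ≤ √3 / 2)
    rw [h34] at this
    linear_combination this
  calc 0 < c * ∫ y in (0:ℝ)..(2 * π / 3), (3 / 4 - sin y ^ 2) :=
        mul_pos hc integral_three_quarters_sub_sin_sq_pos
    _ = ∫ y in (0:ℝ)..(2 * π / 3), (sin y + c) * (3 / 4 - sin y ^ 2) := by
        simp_rw [add_mul]
        rw [integral_add ((by fun_prop : Continuous _).intervalIntegrable _ _)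
          ((by fun_prop : Continuous _).intervalIntegrable _ _), integral_const_mul,
          integral_sin_mul_three_quarters_sub_sin_sq_eq_zero, zero_add]
    _ ≤ _ := integral_mono_on (by positivity) ((by fun_prop : Continuous _).intervalIntegrable _ _)
        ((by fun_prop : Continuous _).intervalIntegrable _ _) hle

theorem skyrme_stmt2 :
    (∫ y in (0:ℝ)..(2 * Real.pi / 3),
        Real.sqrt ((0:ℝ) + Real.sin y ^ 2) * (3/4 - Real.sin y ^ 2)) = 0 ∧
    ∃ ρ₀ > (0:ℝ), ∀ ρ : ℝ, 0 < ρ → ρ < ρ₀ →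
      0 < ∫ y in (0:ℝ)..(2 * Real.pi / 3),
        Real.sqrt (ρ + Real.sin y ^ 2) * (3/4 - Real.sin y ^ 2) :=
  ⟨integral_sqrt_sin_sq_mul_three_quarters_sub_sin_sq_eq_zero,
    1, one_pos, fun _ hρ _ => integral_sqrt_add_sin_sq_mul_three_quarters_sub_sin_sq_pos hρ⟩
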